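/- A collectionwise normal space is paracompact if and only if it is weakly paracompact (metacompact). -/

import Mathlib

noncomputable section
open Set Topology TopologicalSpace

/-- `𝒰` is an open cover of `X`. -/
def IsOpenCover {X : Type} [TopologicalSpace X] (𝒰 : Set (Set X)) : Prop :=
  (∀ U ∈ 𝒰, IsOpen U) ∧ ⋃₀ 𝒰 = univ

/-- Star of a point with respect to a family of sets. -/
def ptStar {X : Type} (x : X) (𝒰 : Set (Set X)) : Set X := ⋃₀ {U | U ∈ 𝒰 ∧ x ∈ U}

/-- Star of a set with respect to a family of sets. -/
def setStar {X : Type} (A : Set X) (𝒰 : Set (Set X)) : Set X :=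
  ⋃₀ {U | U ∈ 𝒰 ∧ (U ∩ A).Nonempty}

/-- `𝒱` star-refines `𝒰`. -/
def StarRefines {X : Type} (𝒱 𝒰 : Set (Set X)) : Prop :=
  ∀ x : X, ∃ U ∈ 𝒰, ptStar x 𝒱 ⊆ U

/-- A continuous partition of unity viewed as a map into `l¹(S)` with image in `Δ(S)`. -/
def IsPU {X S : Type} [TopologicalSpace X] (f : X → lp (fun _ : S => ℝ) 1) : Prop :=
  Continuous f ∧ ∀ x : X, (∀ s : S, 0 ≤ f x s) ∧ HasSum (fun s => f x s) 1

/-- The partition of unity `f` is `𝒰`-small: each carrier lies in a member of `𝒰`. -/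
def IsUSmall {X S : Type} [TopologicalSpace X] (𝒰 : Set (Set X))
    (f : X → lp (fun _ : S => ℝ) 1) : Prop :=
  ∀ s : S, ∃ U ∈ 𝒰, {x : X | f x s ≠ 0} ⊆ U

/-- There exists a `𝒰`-small partition of unity on `X`. -/
def ExistsUSmallPU {X : Type} [TopologicalSpace X] (𝒰 : Set (Set X)) : Prop :=
  ∃ (S : Type) (f : X → lp (fun _ : S => ℝ) 1), IsPU f ∧ IsUSmall 𝒰 f

/-- An indexed family of sets is discrete. -/
def DiscreteFam {X S : Type} [TopologicalSpace X] (A : S → Set X) : Prop :=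
  ∀ x : X, ∃ N ∈ nhds x, {s : S | (A s ∩ N).Nonempty}.Subsingleton

/-- A family of sets (as a set of sets) is discrete. -/
def DiscreteSetFam {X : Type} [TopologicalSpace X] (𝒜 : Set (Set X)) : Prop :=
  ∀ x : X, ∃ N ∈ nhds x, {A | A ∈ 𝒜 ∧ (A ∩ N).Nonempty}.Subsingleton

/-- `𝒰` has a σ-discrete closed refinement. -/
def HasSigmaDiscreteClosedRefinement {X : Type} [TopologicalSpace X]
    (𝒰 : Set (Set X)) : Prop :=
  ∃ D : ℕ → Set (Set X), (∀ n, DiscreteSetFam (D n)) ∧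
    (∀ n, ∀ F ∈ D n, IsClosed F) ∧
    (∀ n, ∀ F ∈ D n, ∃ U ∈ 𝒰, F ⊆ U) ∧
    ⋃₀ (⋃ n, D n) = univ

/-- `X` is collectionwise normal. -/
def CwNormal (X : Type) [TopologicalSpace X] : Prop :=
  ∀ (S : Type) (A : S → Set X), (∀ s, IsClosed (A s)) → DiscreteFam A →
    ∃ V : S → Set X, (∀ s, IsOpen (V s)) ∧ (∀ s, A s ⊆ V s) ∧ DiscreteFam V


/-!
Locally finite families are point-finite, which gives one direction. Conversely, let `𝒱` be a
point-finite open cover and sort the points by the finite set `T x` of members containing them.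
Since `T` can only grow near a point, the points with `#T x = n` that are not yet covered by
the earlier stages form a discrete closed family, indexed by `T x`. Collectionwise normality
expands it to a discrete open family, each member lying in `⋂ T x`, and a shrinking of that
expansion is stage `n`. Removing from stage `n` the closures of all earlier shrinkings makes
the σ-discrete cover locally finite.
-/
namespace DiscreteFam

variable {X S : Type} [TopologicalSpace X] {A B : S → Set X}

theorem mono (hA : DiscreteFam A) (hBA : ∀ s, B s ⊆ A s) : DiscreteFam B := fun x => by
  obtain ⟨N, hN, hsub⟩ := hA x
  exact ⟨N, hN, hsub.anti fun s hs => hs.mono (inter_subset_inter_left _ (hBA s))⟩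

theorem locallyFinite (hA : DiscreteFam A) : LocallyFinite A := fun x => by
  obtain ⟨N, hN, hsub⟩ := hA x
  exact ⟨N, hN, hsub.finite⟩

theorem eq_of_mem {s t : S} {x : X} (hA : DiscreteFam A) (hs : x ∈ A s) (ht : x ∈ A t) :
    s = t := by
  obtain ⟨N, hN, hsub⟩ := hA x
  exact hsub ⟨x, hs, mem_of_mem_nhds hN⟩ ⟨x, ht, mem_of_mem_nhds hN⟩

theorem mem_of_mem_closure {s t : S} {x : X} (hA : DiscreteFam A) (hAo : IsOpen (A t))
    (hs : x ∈ closure (A s)) (ht : x ∈ A t) : x ∈ A s := by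
  obtain ⟨y, hyt, hys⟩ := mem_closure_iff.mp hs (A t) hAo ht
  rwa [eq_of_mem hA hys hyt]

end DiscreteFam

namespace CwNormal

variable {X : Type} [TopologicalSpace X]

theorem normalSpace (hX : CwNormal X) : NormalSpace X := by
  refine ⟨fun s t hs ht hst => ?_⟩
  have hdisc : DiscreteFam fun b : Bool => cond b s t := by
    intro x
    by_cases hx : x ∈ s
    · refine ⟨tᶜ, ht.isOpen_compl.mem_nhds (hst.notMem_of_mem_left hx), ?_⟩
      refine (subsingleton_singleton (a := true)).anti fun b ⟨y, hy, hyt⟩ => ?_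
      cases b
      exacts [(hyt hy).elim, rfl]
    · refine ⟨sᶜ, hs.isOpen_compl.mem_nhds hx, ?_⟩
      refine (subsingleton_singleton (a := false)).anti fun b ⟨y, hy, hys⟩ => ?_
      cases b
      exacts [rfl, (hys hy).elim]
  obtain ⟨V, hVo, hAV, hVd⟩ := hX Bool _ (fun b => by cases b <;> assumption) hdisc
  exact ⟨V true, V false, hVo true, hVo false, hAV true, hAV false,
    disjoint_left.mpr fun x hxt hxf => absurd (DiscreteFam.eq_of_mem hVd hxt hxf) (by decide)⟩

theorem exists_expansion_closure_subset (hX : CwNormal X) {S : Type} {D O : S → Set X}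
    (hDc : ∀ s, IsClosed (D s)) (hDd : DiscreteFam D) (hOo : ∀ s, IsOpen (O s))
    (hDO : ∀ s, D s ⊆ O s) :
    ∃ A W : S → Set X, (∀ s, IsOpen (A s)) ∧ (∀ s, IsOpen (W s)) ∧ DiscreteFam W ∧
      (∀ s, D s ⊆ A s) ∧ (∀ s, closure (A s) ⊆ W s) ∧ ∀ s, W s ⊆ O s := by
  have := normalSpace hX
  obtain ⟨V, hVo, hDV, hVd⟩ := hX S D hDc hDd
  have hWd : DiscreteFam fun s => V s ∩ O s := DiscreteFam.mono hVd fun s => inter_subset_left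
  have hWo : ∀ s, IsOpen (V s ∩ O s) := fun s => (hVo s).inter (hOo s)
  -- A single open `G` between `⋃ D` and `⋃ W` suffices: the closure of `G ∩ W s` cannot meet
  -- any other `W t`, as these are open and disjoint from `W s`.
  obtain ⟨G, hGo, hDG, hGW⟩ := normal_exists_closure_subset
    ((DiscreteFam.locallyFinite hDd).isClosed_iUnion hDc) (isOpen_iUnion hWo)
    (iUnion_mono fun s => subset_inter (hDV s) (hDO s))
  refine ⟨fun s => G ∩ (V s ∩ O s), fun s => V s ∩ O s, fun s => hGo.inter (hWo s), hWo, hWd,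
    fun s x hx => ?_, fun s x hx => ?_, fun s => inter_subset_right⟩
  · exact ⟨hDG (mem_iUnion_of_mem s hx), hDV s hx, hDO s hx⟩
  · obtain ⟨t, ht⟩ := mem_iUnion.mp (hGW (closure_mono inter_subset_left hx))
    exact DiscreteFam.mem_of_mem_closure (A := fun s => V s ∩ O s) hWd (hWo t)
      (closure_mono inter_subset_right hx) ht

end CwNormal

section SigmaRefinement

variable {X ι : Type*} [TopologicalSpace X] (A B : ℕ → ι → Set X)

def sigmaRefinement (p : ℕ × ι) : Set X :=
  B p.1 p.2 \ ⋃ k < p.1, ⋃ i, closure (A k i)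

variable {A B}

theorem isOpen_sigmaRefinement (hBo : ∀ n i, IsOpen (B n i))
    (hAB : ∀ n i, closure (A n i) ⊆ B n i) (hBlf : ∀ n, LocallyFinite (B n)) (p : ℕ × ι) :
    IsOpen (sigmaRefinement A B p) :=
  (hBo p.1 p.2).sdiff <| (finite_Iio p.1).isClosed_biUnion fun k _ =>
    ((hBlf k).subset (hAB k)).isClosed_iUnion fun _ => isClosed_closure

theorem iUnion_sigmaRefinement (hAB : ∀ n i, closure (A n i) ⊆ B n i)
    (hcov : ⋃ n, ⋃ i, A n i = univ) : ⋃ p, sigmaRefinement A B p = univ := by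
  classical
  refine eq_univ_of_forall fun x => ?_
  have hex : ∃ n, x ∈ ⋃ i, closure (A n i) := by
    obtain ⟨n, hn⟩ := mem_iUnion.mp (hcov.ge (mem_univ x))
    exact ⟨n, iUnion_mono (fun i => subset_closure) hn⟩
  obtain ⟨i, hi⟩ := mem_iUnion.mp (Nat.find_spec hex)
  refine mem_iUnion.mpr ⟨(Nat.find hex, i), hAB _ i hi, fun hmem => ?_⟩
  obtain ⟨k, hk, hxk⟩ := mem_iUnion₂.mp hmem
  exact Nat.find_min hex hk hxk

/-- The sets at stages `n > n₀` avoid the open set `A n₀ i₀`, which lies in the removed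
closures; below `n₀` only finitely many stages remain, each locally finite. -/
theorem locallyFinite_sigmaRefinement (hAo : ∀ n i, IsOpen (A n i))
    (hBlf : ∀ n, LocallyFinite (B n)) (hcov : ⋃ n, ⋃ i, A n i = univ) :
    LocallyFinite (sigmaRefinement A B) := by
  intro x
  obtain ⟨n₀, i₀, hx⟩ := mem_iUnion₂.mp (hcov.ge (mem_univ x))
  choose N hN hNfin using fun k => hBlf k x
  refine ⟨A n₀ i₀ ∩ ⋂ k ∈ Iic n₀, N k,
    Filter.inter_mem ((hAo n₀ i₀).mem_nhds hx)
      ((Filter.biInter_mem (finite_Iic n₀)).mpr fun k _ => hN k),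
    ((finite_Iic n₀).biUnion fun k _ => (finite_singleton k).prod (hNfin k)).subset ?_⟩
  rintro ⟨n, i⟩ ⟨y, ⟨hyB, hyM⟩, hyA, hyN⟩
  have hn : n ≤ n₀ := not_lt.mp fun hlt =>
    hyM (mem_biUnion hlt (mem_iUnion_of_mem i₀ (subset_closure hyA)))
  exact mem_biUnion hn ⟨rfl, y, hyB, mem_iInter₂.mp hyN n hn⟩

end SigmaRefinement

section LevelSet

variable {X ι : Type} [TopologicalSpace X] {T : X → Finset ι} {n : ℕ} {P : Set X}

def levelSet (T : X → Finset ι) (n : ℕ) (P : Set X) (F : Finset ι) : Set X :=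
  {x | x ∉ P ∧ T x = F ∧ F.card = n}

/-- Near a point outside `P`, the index set `T` can only grow, and all points of smaller
cardinality lie in `P`; so the level sets met nearby are those of the point itself. -/
theorem eventually_eq_of_mem_levelSet (hT : ∀ x, ∀ᶠ y in 𝓝 x, T x ⊆ T y)
    (hlow : ∀ x, (T x).card < n → x ∈ P) {x : X} (hx : x ∉ P) :
    ∀ᶠ y in 𝓝 x, ∀ F, y ∈ levelSet T n P F → F = T x := by
  filter_upwards [hT x] with y hy F ⟨_, hyF, hF⟩
  subst hyF
  exact (Finset.eq_of_subset_of_card_le hy (hF ▸ not_lt.mp (hx ∘ hlow x))).symm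

theorem isClosed_levelSet (hT : ∀ x, ∀ᶠ y in 𝓝 x, T x ⊆ T y) (hP : IsOpen P)
    (hlow : ∀ x, (T x).card < n → x ∈ P) (F : Finset ι) : IsClosed (levelSet T n P F) := by
  refine isClosed_of_closure_subset fun x hx => ?_
  have hxP : x ∉ P := fun hxP => by
    obtain ⟨y, hyP, hy⟩ := mem_closure_iff.mp hx P hP hxP
    exact hy.1 hyP
  obtain ⟨y, hy, hyF⟩ := ((mem_closure_iff_frequently.mp hx).and_eventually
    (eventually_eq_of_mem_levelSet hT hlow hxP)).exists
  exact ⟨hxP, (hyF F hy).symm, hy.2.2⟩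

theorem discreteFam_levelSet (hT : ∀ x, ∀ᶠ y in 𝓝 x, T x ⊆ T y) (hP : IsOpen P)
    (hlow : ∀ x, (T x).card < n → x ∈ P) : DiscreteFam (levelSet T n P) := by
  intro x
  by_cases hxP : x ∈ P
  · exact ⟨P, hP.mem_nhds hxP, fun F ⟨y, hy, hyP⟩ => (hy.1 hyP).elim⟩
  · exact ⟨_, eventually_eq_of_mem_levelSet hT hlow hxP,
      fun F ⟨y, hy, hyN⟩ G ⟨z, hz, hzN⟩ => (hyN F hy).trans (hzN G hz).symm⟩

end LevelSet

section Stages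

variable {X κ : Type*}

def stageUnion (A : ℕ → Set X → κ → Set X) : ℕ → Set X
  | 0 => ∅
  | n + 1 => stageUnion A n ∪ ⋃ k, A n (stageUnion A n) k

theorem isOpen_stageUnion [TopologicalSpace X] {A : ℕ → Set X → κ → Set X}
    (hA : ∀ n P k, IsOpen (A n P k)) :
    ∀ n, IsOpen (stageUnion A n)
  | 0 => isOpen_empty
  | n + 1 => (isOpen_stageUnion hA n).union (isOpen_iUnion (hA n _))

theorem stageUnion_subset_iUnion (A : ℕ → Set X → κ → Set X) :
    ∀ n, stageUnion A n ⊆ ⋃ m, ⋃ k, A m (stageUnion A m) k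
  | 0 => empty_subset _
  | n + 1 => union_subset (stageUnion_subset_iUnion A n) (subset_iUnion_of_subset n subset_rfl)

end Stages

section PointFinite

variable {X : Type} [TopologicalSpace X]

theorem iUnion_stage_levelSet_eq_univ {ι : Type} {T : X → Finset ι}
    {A : ℕ → Set X → Finset ι → Set X} (hAo : ∀ n P F, IsOpen (A n P F))
    (hDA : ∀ n P, IsOpen P → (∀ x, (T x).card < n → x ∈ P) → ∀ F, levelSet T n P F ⊆ A n P F) :
    ⋃ n, ⋃ F, A n (stageUnion A n) F = univ := by
  have hlow : ∀ n x, (T x).card < n → x ∈ stageUnion A n := by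
    intro n
    induction n with
    | zero => exact fun x hx => absurd hx (Nat.not_lt_zero _)
    | succ n ih =>
      intro x hx
      by_cases hxP : x ∈ stageUnion A n
      · exact Or.inl hxP
      · refine Or.inr (mem_iUnion.mpr ⟨T x, hDA n _ (isOpen_stageUnion hAo n) ih (T x)
          ⟨hxP, rfl, le_antisymm (Nat.lt_succ_iff.mp hx) (not_lt.mp (hxP ∘ ih x))⟩⟩)
  exact eq_univ_of_forall fun x =>
    stageUnion_subset_iUnion A _ (hlow _ x (Nat.lt_succ_self _))

/-- The last clause is vacuous unless `P` is an admissible predecessor, so that the stages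
can be chosen as functions of an arbitrary `P`. -/
theorem exists_levelSet_expansion (hX : CwNormal X) {ι : Type} {T : X → Finset ι}
    (hT : ∀ x, ∀ᶠ y in 𝓝 x, T x ⊆ T y) {O : Finset ι → Set X} (hOo : ∀ F, IsOpen (O F))
    (hTO : ∀ x, x ∈ O (T x)) (n : ℕ) (P : Set X) :
    ∃ A W : Finset ι → Set X, (∀ F, IsOpen (A F)) ∧ (∀ F, IsOpen (W F)) ∧ DiscreteFam W ∧
      (∀ F, closure (A F) ⊆ W F) ∧ (∀ F, W F ⊆ O F) ∧
      (IsOpen P → (∀ x, (T x).card < n → x ∈ P) → ∀ F, levelSet T n P F ⊆ A F) := by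
  by_cases hP : IsOpen P ∧ ∀ x, (T x).card < n → x ∈ P
  · obtain ⟨A, W, hAo, hWo, hWd, hDA, hAW, hWO⟩ := CwNormal.exists_expansion_closure_subset hX
      (isClosed_levelSet hT hP.1 hP.2) (discreteFam_levelSet hT hP.1 hP.2) hOo
      fun F x hx => hx.2.1 ▸ hTO x
    exact ⟨A, W, hAo, hWo, hWd, hAW, hWO, fun _ _ => hDA⟩
  · refine ⟨fun _ => ∅, fun _ => ∅, fun _ => isOpen_empty, fun _ => isOpen_empty,
      fun _ => ⟨univ, Filter.univ_mem, fun _ ⟨_, h, _⟩ => h.elim⟩, fun _ => by simp,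
      fun _ => empty_subset _, fun h₁ h₂ => (hP ⟨h₁, h₂⟩).elim⟩

theorem exists_locallyFinite_refinement_of_pointFinite (hX : CwNormal X) {ι : Type}
    (V : ι → Set X) (hVo : ∀ i, IsOpen (V i)) (hcov : ⋃ i, V i = univ)
    (hpf : ∀ x, {i | x ∈ V i}.Finite) :
    ∃ (β : Type) (t : β → Set X), (∀ b, IsOpen (t b)) ∧ ⋃ b, t b = univ ∧ LocallyFinite t ∧
      ∀ b, (t b).Nonempty → ∃ i, t b ⊆ V i := by
  set T : X → Finset ι := fun x => (hpf x).toFinset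
  have hmemT : ∀ x i, i ∈ T x ↔ x ∈ V i := fun x i => Finite.mem_toFinset _
  have hT : ∀ x, ∀ᶠ y in 𝓝 x, T x ⊆ T y := fun x =>
    (T x).eventually_all.mpr fun i hi =>
      ((hVo i).eventually_mem ((hmemT x i).mp hi)).mono fun y hy => (hmemT y i).mpr hy
  -- The union factor only excludes `F = ∅`, for which the intersection is `univ`.
  set O : Finset ι → Set X := fun F => (⋂ i ∈ F, V i) ∩ ⋃ i ∈ F, V i
  have hOo : ∀ F, IsOpen (O F) := fun F =>
    (isOpen_biInter_finset fun i _ => hVo i).inter (isOpen_biUnion fun i _ => hVo i)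
  have hTO : ∀ x, x ∈ O (T x) := fun x => by
    obtain ⟨i, hi⟩ := mem_iUnion.mp (hcov.ge (mem_univ x))
    exact ⟨mem_iInter₂.mpr fun j hj => (hmemT x j).mp hj,
      mem_iUnion₂.mpr ⟨i, (hmemT x i).mpr hi, hi⟩⟩
  choose A W hAo hWo hWd hAW hWO hDA using exists_levelSet_expansion hX hT hOo hTO
  have hAcov := iUnion_stage_levelSet_eq_univ hAo hDA
  have hWlf : ∀ n, LocallyFinite (W n (stageUnion A n)) := fun n =>
    DiscreteFam.locallyFinite (hWd n _)
  refine ⟨_, _, isOpen_sigmaRefinement (fun n => hWo n _) (fun n => hAW n _) hWlf,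
    iUnion_sigmaRefinement (fun n => hAW n _) hAcov,
    locallyFinite_sigmaRefinement (fun n => hAo n _) hWlf hAcov, ?_⟩
  rintro ⟨n, F⟩ ⟨y, hy, -⟩
  obtain ⟨i, hi, -⟩ := mem_iUnion₂.mp (hWO n _ F hy).2
  exact ⟨i, fun z hz => mem_iInter₂.mp (hWO n _ F hz.1).1 i hi⟩

theorem paracompactSpace_of_pointFinite_refinement (hX : CwNormal X)
    (H : ∀ 𝒰 : Set (Set X), IsOpenCover 𝒰 →
      ∃ 𝒱 : Set (Set X), IsOpenCover 𝒱 ∧ (∀ V ∈ 𝒱, ∃ U ∈ 𝒰, V ⊆ U) ∧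
        ∀ x : X, {V | V ∈ 𝒱 ∧ x ∈ V}.Finite) :
    ParacompactSpace X := by
  refine ⟨fun α s hso hscov => ?_⟩
  obtain ⟨𝒱, ⟨hVo, hVcov⟩, hVs, hpf⟩ :=
    H (range s) ⟨forall_mem_range.2 hso, by rwa [sUnion_range]⟩
  obtain ⟨β, t, hto, htcov, htlf, htV⟩ := exists_locallyFinite_refinement_of_pointFinite hX
    ((↑) : 𝒱 → Set X) (fun V => hVo V V.2) (by rwa [← sUnion_eq_iUnion])
    fun x => ((hpf x).preimage Subtype.val_injective.injOn).subset fun V hV => ⟨V.2, hV⟩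
  refine ⟨{b // (t b).Nonempty}, fun b => t b, fun b => hto b, eq_univ_of_forall fun x => ?_,
    htlf.comp_injective Subtype.val_injective, fun b => ?_⟩
  · obtain ⟨b, hb⟩ := mem_iUnion.mp (htcov.ge (mem_univ x))
    exact mem_iUnion.mpr ⟨⟨b, x, hb⟩, hb⟩
  · obtain ⟨⟨V, hV⟩, hbV⟩ := htV b b.2
    obtain ⟨_, ⟨a, rfl⟩, hVa⟩ := hVs V hV
    exact ⟨a, hbV.trans hVa⟩

theorem pointFinite_refinement_of_paracompactSpace [ParacompactSpace X] (𝒰 : Set (Set X))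
    (h𝒰 : IsOpenCover 𝒰) :
    ∃ 𝒱 : Set (Set X), IsOpenCover 𝒱 ∧ (∀ V ∈ 𝒱, ∃ U ∈ 𝒰, V ⊆ U) ∧
      ∀ x : X, {V | V ∈ 𝒱 ∧ x ∈ V}.Finite := by
  obtain ⟨β, t, hto, htcov, htlf, hts⟩ := ParacompactSpace.locallyFinite_refinement 𝒰
    ((↑) : 𝒰 → Set X) (fun U => h𝒰.1 U U.2) (by rw [← sUnion_eq_iUnion, h𝒰.2])
  refine ⟨range t, ⟨forall_mem_range.2 hto, by rwa [sUnion_range]⟩,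
    forall_mem_range.2 fun b => ?_, fun x => ?_⟩
  · obtain ⟨U, hU⟩ := hts b
    exact ⟨U, U.2, hU⟩
  · refine ((htlf.point_finite x).image t).subset ?_
    rintro _ ⟨⟨b, rfl⟩, hx⟩
    exact mem_image_of_mem t hx

end PointFinite

/-- Michael–Nagami: a collectionwise normal space is paracompact iff it is weakly
paracompact (metacompact). -/
theorem stmt13 (X : Type) [TopologicalSpace X] (hX : CwNormal X) :
    ParacompactSpace X ↔
      ∀ 𝒰 : Set (Set X), IsOpenCover 𝒰 →
        ∃ 𝒱 : Set (Set X), IsOpenCover 𝒱 ∧ (∀ V ∈ 𝒱, ∃ U ∈ 𝒰, V ⊆ U) ∧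
          ∀ x : X, {V | V ∈ 𝒱 ∧ x ∈ V}.Finite :=
  ⟨fun _ => pointFinite_refinement_of_paracompactSpace,
    paracompactSpace_of_pointFinite_refinement hX⟩
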